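/- arXiv:1403.7605 — 2 statements merged into one kernel-verified Lean document; each statement's English description precedes it below -/
import Mathlib

section
/- Let G be an n-resource selection game such that no two of the cost functions f_1, …, f_n share any plateau height. Then for every resource j ∈ {1,…,n} and every two Nash equilibria s and s' of G, the loads coincide: ℓ_j^s = ℓ_j^{s'}. -/
open scoped NNReal

namespace RSG

/-- A consumption profile in an `n`-resource selection game: each nonempty type
`R ⊆ [n]` distributes its mass `μ R` among the resources in `R`. -/
def IsProfile (n : ℕ) (μ : Finset (Fin n) → ℝ≥0) (s : Finset (Fin n) → Fin n → ℝ≥0) : Prop :=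
  (∀ R : Finset (Fin n), ∀ j : Fin n, j ∉ R → s R j = 0) ∧
  (∀ R : Finset (Fin n), R.Nonempty → ∑ j ∈ R, s R j = μ R)

/-- The load on resource `j` in profile `s`. -/
def load (n : ℕ) (s : Finset (Fin n) → Fin n → ℝ≥0) (j : Fin n) : ℝ≥0 :=
  ∑ R : Finset (Fin n), s R j

/-- The cost of resource `j` in profile `s`. -/
def cost (n : ℕ) (f : Fin n → ℝ≥0 → ℝ) (s : Finset (Fin n) → Fin n → ℝ≥0) (j : Fin n) : ℝ :=
  f j (load n s j)

/-- A Nash equilibrium. -/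
def IsNash (n : ℕ) (f : Fin n → ℝ≥0 → ℝ) (μ : Finset (Fin n) → ℝ≥0)
    (s : Finset (Fin n) → Fin n → ℝ≥0) : Prop :=
  IsProfile n μ s ∧
  ∀ R : Finset (Fin n), ∀ k ∈ R, 0 < s R k → ∀ j ∈ R, cost n f s k ≤ cost n f s j

/-- A strong Nash equilibrium: a Nash equilibrium `s` such that there is no
consumption profile `s' ≠ s` in which every player who strictly increases its
consumption of some resource `k` (i.e. `s' R k > s R k`) pays, at `k` in `s'`,
strictly less than the common equilibrium cost `h^R` of its type
(expressed via: less than `cost s j` for every `j` in the support of `s R`). -/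
def IsStrong (n : ℕ) (f : Fin n → ℝ≥0 → ℝ) (μ : Finset (Fin n) → ℝ≥0)
    (s : Finset (Fin n) → Fin n → ℝ≥0) : Prop :=
  IsNash n f μ s ∧
  ¬ ∃ s' : Finset (Fin n) → Fin n → ℝ≥0, IsProfile n μ s' ∧ s' ≠ s ∧
    ∀ R : Finset (Fin n), ∀ k : Fin n, s R k < s' R k →
      ∀ j : Fin n, 0 < s R j → cost n f s' k < cost n f s j

end RSG

open RSG

/-- `h` is a plateau height of `f` if `f` attains the value `h` at two distinct points. -/
def IsPlateauHeight (f : ℝ≥0 → ℝ) (h : ℝ) : Prop :=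
  ∃ x y : ℝ≥0, x ≠ y ∧ f x = h ∧ f y = h

/-!
Pricing loads at the equilibrium costs of a Nash equilibrium `s`, no profile does better than `s`
itself. Adding this variational inequality for two equilibria `s`, `s'` against the monotonicity
of the costs forces `h^s = h^{s'}`. Every type then puts its whole mass on the resources of its
cheapest cost, so the total load on each level set `{i | h_i = t}` is the same in `s` and `s'`.
Within that level set, a resource whose load differs would have `t` as a plateau height, so at most
one resource can differ, and by the equality of totals none does.
-/

open Finset

theorem Finset.apply_eq_of_sum_eq_of_forall_ne {ι M : Type*} [AddCancelCommMonoid M]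
    {s : Finset ι} {a b : ι → M} {j : ι} (hj : j ∈ s)
    (hsum : ∑ i ∈ s, a i = ∑ i ∈ s, b i) (hne : ∀ i ∈ s, i ≠ j → a i = b i) : a j = b j := by
  classical
  rw [← add_sum_erase s a hj, ← add_sum_erase s b hj,
    sum_congr rfl fun i hi => hne i (mem_of_mem_erase hi) (ne_of_mem_erase hi)] at hsum
  exact add_right_cancel hsum

namespace RSG

variable {n : ℕ} {f : Fin n → ℝ≥0 → ℝ} {μ : Finset (Fin n) → ℝ≥0}
  {s s' : Finset (Fin n) → Fin n → ℝ≥0} {R : Finset (Fin n)}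

theorem sum_mul_load (D : Fin n → ℝ) (s : Finset (Fin n) → Fin n → ℝ≥0) :
    ∑ j, D j * load n s j = ∑ R, ∑ j, D j * s R j := by
  simp only [load, NNReal.coe_sum, mul_sum]
  exact sum_comm

namespace IsProfile

theorem apply_empty (hs : IsProfile n μ s) (j : Fin n) : s ∅ j = 0 :=
  hs.1 ∅ j (notMem_empty j)

theorem sum_univ (hs : IsProfile n μ s) (hR : R.Nonempty) : ∑ j, s R j = μ R := by
  rw [← hs.2 R hR]
  exact (sum_subset (subset_univ R) fun j _ hj => hs.1 R j hj).symm

theorem inf'_mul_le (hs : IsProfile n μ s) (D : Fin n → ℝ) (hR : R.Nonempty) :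
    R.inf' hR D * μ R ≤ ∑ j, D j * s R j := by
  rw [← hs.sum_univ hR, NNReal.coe_sum, mul_sum]
  refine sum_le_sum fun j _ => ?_
  by_cases hj : j ∈ R
  · exact mul_le_mul_of_nonneg_right (inf'_le D hj) (s R j).coe_nonneg
  · simp [hs.1 R j hj]

end IsProfile

namespace IsNash

theorem cost_eq_inf' (hs : IsNash n f μ s) (hR : R.Nonempty) {k : Fin n} (hk : k ∈ R)
    (hpos : 0 < s R k) : cost n f s k = R.inf' hR (cost n f s) :=
  le_antisymm (le_inf' hR _ fun j hj => hs.2 R k hk hpos j hj) (inf'_le _ hk)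

theorem cost_eq_inf'_of_ne_zero (hs : IsNash n f μ s) (hR : R.Nonempty) {k : Fin n}
    (hk : s R k ≠ 0) : cost n f s k = R.inf' hR (cost n f s) :=
  hs.cost_eq_inf' hR (by_contra fun hkR => hk (hs.1.1 R k hkR)) (pos_iff_ne_zero.2 hk)

theorem sum_cost_mul_eq (hs : IsNash n f μ s) (hR : R.Nonempty) :
    ∑ j, cost n f s j * s R j = R.inf' hR (cost n f s) * μ R := by
  rw [← hs.1.sum_univ hR, NNReal.coe_sum, mul_sum]
  refine sum_congr rfl fun j _ => ?_
  by_cases hj : s R j = 0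
  · simp [hj]
  · rw [hs.cost_eq_inf'_of_ne_zero hR hj]

theorem sum_cost_mul_load_le (hs : IsNash n f μ s) (hs' : IsProfile n μ s') :
    ∑ j, cost n f s j * load n s j ≤ ∑ j, cost n f s j * load n s' j := by
  rw [sum_mul_load, sum_mul_load]
  refine sum_le_sum fun R _ => ?_
  rcases R.eq_empty_or_nonempty with rfl | hR
  · simp [hs.1.apply_empty, hs'.apply_empty]
  · exact (hs.sum_cost_mul_eq hR).trans_le (hs'.inf'_mul_le _ hR)

theorem cost_eq (hmono : ∀ j, Monotone (f j)) (hs : IsNash n f μ s)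
    (hs' : IsNash n f μ s') : cost n f s = cost n f s' := by
  set term : Fin n → ℝ := fun j =>
    (cost n f s' j - cost n f s j) * (load n s' j - load n s j)
  have hterm_nonneg : ∀ j, 0 ≤ term j := fun j =>
    ((hmono j).monovary NNReal.coe_mono).sub_mul_sub_nonneg _ _
  have hsum : ∑ j, term j = (∑ j, cost n f s' j * load n s' j - ∑ j, cost n f s' j * load n s j)
      + (∑ j, cost n f s j * load n s j - ∑ j, cost n f s j * load n s' j) := by
    simp only [term, sub_mul, mul_sub, sum_sub_distrib]
    ring
  have hterm_zero : ∀ j, term j = 0 := fun j =>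
    (sum_eq_zero_iff_of_nonneg fun j _ => hterm_nonneg j).1
      (by linarith [hs.sum_cost_mul_load_le hs'.1, hs'.sum_cost_mul_load_le hs.1,
        sum_nonneg fun j (_ : j ∈ univ) => hterm_nonneg j]) j (mem_univ j)
  funext j
  by_cases hl : load n s j = load n s' j
  · simp only [cost, hl]
  · have hl' : (load n s' j : ℝ) - load n s j ≠ 0 :=
      sub_ne_zero.2 fun h => hl (NNReal.coe_injective h).symm
    exact (sub_eq_zero.1 ((mul_eq_zero.1 (hterm_zero j)).resolve_right hl')).symm

theorem sum_filter_cost_eq (hs : IsNash n f μ s) (hR : R.Nonempty) (t : ℝ) :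
    ∑ j with cost n f s j = t, s R j = if R.inf' hR (cost n f s) = t then μ R else 0 := by
  have hterm : ∀ j, (if cost n f s j = t then s R j else 0)
      = if R.inf' hR (cost n f s) = t then s R j else 0 := fun j => by
    by_cases hj : s R j = 0
    · simp [hj]
    · rw [hs.cost_eq_inf'_of_ne_zero hR hj]
  rw [sum_filter, sum_congr rfl fun j _ => hterm j, sum_ite_irrel, hs.1.sum_univ hR,
    sum_const_zero]

theorem sum_load_filter_cost_eq (hs : IsNash n f μ s) (hs' : IsNash n f μ s')
    (hC : cost n f s = cost n f s') (t : ℝ) :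
    ∑ j with cost n f s j = t, load n s j = ∑ j with cost n f s j = t, load n s' j := by
  simp only [load]
  rw [sum_comm, sum_comm (s := filter _ _)]
  refine sum_congr rfl fun R _ => ?_
  rcases R.eq_empty_or_nonempty with rfl | hR
  · simp [hs.1.apply_empty, hs'.1.apply_empty]
  · rw [hs.sum_filter_cost_eq hR, hC, hs'.sum_filter_cost_eq hR]

end IsNash

end RSG

/-- If no two of the cost functions share any plateau height,
then the load on each resource is the same in all Nash equilibria. -/
theorem nash_load_unique (n : ℕ) (f : Fin n → ℝ≥0 → ℝ)
    (μ : Finset (Fin n) → ℝ≥0) (hmono : ∀ j, Monotone (f j))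
    (hplateau : ∀ i j : Fin n, i ≠ j →
      ∀ h : ℝ, ¬ (IsPlateauHeight (f i) h ∧ IsPlateauHeight (f j) h))
    (s s' : Finset (Fin n) → Fin n → ℝ≥0)
    (hs : IsNash n f μ s) (hs' : IsNash n f μ s') (j : Fin n) :
    load n s j = load n s' j := by
  have hC := hs.cost_eq hmono hs'
  have hplateau_of_ne : ∀ i, load n s i ≠ load n s' i → IsPlateauHeight (f i) (cost n f s i) :=
    fun i hi => ⟨_, _, hi, rfl, congrFun hC.symm i⟩
  by_contra hj
  refine hj (apply_eq_of_sum_eq_of_forall_ne (by simp)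
    (hs.sum_load_filter_cost_eq hs' hC (cost n f s j)) fun i hi hij => ?_)
  by_contra hi'
  exact hplateau i j hij _ ⟨(mem_filter.1 hi).2 ▸ hplateau_of_ne i hi', hplateau_of_ne j hj⟩
end

section
/- Let n ∈ ℕ, let f_1, …, f_n : ℝ≥0 → ℝ be continuous nondecreasing functions, fix a nonempty R₀ ⊆ {1,…,n} and masses μ^R ≥ 0 for every nonempty R ⊆ {1,…,n} with R ≠ R₀, and for each μ ≥ 0 let G_μ be the resource selection game with these data and with the mass of type R₀ equal to μ. Fix j ∈ {1,…,n} and let H_j(μ) denote the cost h_j^s of resource j in any Nash equilibrium s of G_μ (this value exists and is independent of the choice of Nash equilibrium). Then: (a) H_j : ℝ≥0 → ℝ is continuous and nondecreasing; (b) if moreover f_j is Lipschitz with constant K, then H_j is Lipschitz with constant K. -/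
open scoped NNReal

open RSG

/-!
A minimiser of the Beckmann potential `∑ i, ∫₀^{ℓᵢ} fᵢ` over the compact set of consumption
profiles is a Nash equilibrium, since moving a little mass of some type from a costlier to a
cheaper resource lowers the potential.

Compare equilibria `s`, `s'` for masses `μ`, `μ'`, and let `A` be the set of resources whose
cost is higher in `s'`. No type puts more mass on some resource of `A` while putting less on
some resource outside `A`, so the total load on `A` grows by at most `∑ R, (μ' R - μ R)⁺`; since
every load in `A` grows, each of them grows by at most that much. For `μ ≤ μ'`, exchanging the
roles of `s` and `s'` shows that no cost drops, i.e. monotonicity. When only the mass of `R₀` moves from `m` to `m'`, either `H` does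
not change or the load of `j` moves by at most `|m - m'|`, and composing with `f j` gives
continuity and the Lipschitz bound.
-/

noncomputable def primitive (g : ℝ≥0 → ℝ) (x : ℝ≥0) : ℝ :=
  ∫ t in (0 : ℝ)..x, g t.toNNReal

section primitive

variable {g : ℝ≥0 → ℝ}

lemma Monotone.intervalIntegrable_comp_toNNReal (hg : Monotone g) (a b : ℝ) :
    IntervalIntegrable (fun t : ℝ => g t.toNNReal) MeasureTheory.volume a b :=
  (hg.comp fun _ _ h => Real.toNNReal_le_toNNReal h).intervalIntegrable

lemma continuous_primitive (hg : Monotone g) : Continuous (primitive g) :=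
  (intervalIntegral.continuous_primitive hg.intervalIntegrable_comp_toNNReal 0).comp
    NNReal.continuous_coe

lemma primitive_sub_primitive (hg : Monotone g) (a b : ℝ≥0) :
    primitive g b - primitive g a = ∫ t in (a : ℝ)..b, g t.toNNReal := by
  rw [primitive, primitive, ← intervalIntegral.integral_add_adjacent_intervals
    (hg.intervalIntegrable_comp_toNNReal 0 a) (hg.intervalIntegrable_comp_toNNReal a b),
    add_sub_cancel_left]

lemma primitive_sub_primitive_le (hg : Monotone g) {a b : ℝ≥0} (hab : a ≤ b) :
    primitive g b - primitive g a ≤ (b - a : ℝ) * g b := by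
  rw [primitive_sub_primitive hg, ← smul_eq_mul, ← intervalIntegral.integral_const]
  refine intervalIntegral.integral_mono_on hab (hg.intervalIntegrable_comp_toNNReal a b)
    intervalIntegrable_const fun t ht => hg ?_
  exact Real.toNNReal_le_iff_le_coe.2 ht.2

lemma le_primitive_sub_primitive (hg : Monotone g) {a b : ℝ≥0} (hab : a ≤ b) :
    (b - a : ℝ) * g a ≤ primitive g b - primitive g a := by
  rw [primitive_sub_primitive hg, ← smul_eq_mul, ← intervalIntegral.integral_const]
  refine intervalIntegral.integral_mono_on hab intervalIntegrable_const
    (hg.intervalIntegrable_comp_toNNReal a b) fun t ht => hg ?_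
  exact (Real.le_toNNReal_iff_coe_le (a.coe_nonneg.trans ht.1)).2 ht.1

end primitive

lemma Continuous.comp_of_eq_or_dist_le {X Y Z : Type*} [PseudoMetricSpace X]
    [PseudoMetricSpace Y] [TopologicalSpace Z] {g : Y → Z} {ℓ : X → Y} (hg : Continuous g)
    (h : ∀ x x', g (ℓ x) = g (ℓ x') ∨ dist (ℓ x) (ℓ x') ≤ dist x x') : Continuous (g ∘ ℓ) := by
  refine continuous_iff_continuousAt.2 fun x U hU => ?_
  obtain ⟨δ, hδ, hball⟩ := Metric.mem_nhds_iff.1 (hg.continuousAt hU)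
  refine Metric.mem_nhds_iff.2 ⟨δ, hδ, fun x' hx' => ?_⟩
  rcases h x' x with heq | hdist
  · exact show g (ℓ x') ∈ U from heq ▸ mem_of_mem_nhds hU
  · exact hball (hdist.trans_lt hx')

lemma LipschitzWith.comp_of_eq_or_dist_le {X Y Z : Type*} [PseudoMetricSpace X]
    [PseudoMetricSpace Y] [PseudoMetricSpace Z] {K : ℝ≥0} {g : Y → Z} {ℓ : X → Y}
    (hg : LipschitzWith K g)
    (h : ∀ x x', g (ℓ x) = g (ℓ x') ∨ dist (ℓ x) (ℓ x') ≤ dist x x') :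
    LipschitzWith K (g ∘ ℓ) := by
  refine LipschitzWith.of_dist_le_mul fun x x' => ?_
  rcases h x x' with heq | hdist
  · simp only [Function.comp_apply, heq, dist_self]
    positivity
  · exact (hg.dist_le_mul _ _).trans (mul_le_mul_of_nonneg_left hdist K.coe_nonneg)

namespace RSG

variable {n : ℕ} {f : Fin n → ℝ≥0 → ℝ} {μ μ' : Finset (Fin n) → ℝ≥0}
  {s s' : Finset (Fin n) → Fin n → ℝ≥0}

lemma IsProfile.mem_of_pos (hs : IsProfile n μ s) {R : Finset (Fin n)} {i : Fin n}
    (h : 0 < s R i) : i ∈ R := by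
  by_contra hi
  exact h.ne' (hs.1 R i hi)

lemma le_load (s : Finset (Fin n) → Fin n → ℝ≥0) (R : Finset (Fin n)) (j : Fin n) :
    s R j ≤ load n s j :=
  Finset.single_le_sum (f := fun R => s R j) (fun _ _ => zero_le) (Finset.mem_univ R)

lemma IsProfile.sum_univ_s8 (hs : IsProfile n μ s) {R : Finset (Fin n)} (hR : R.Nonempty) :
    ∑ i, s R i = μ R := by
  rw [← hs.2 R hR]
  exact (Finset.sum_subset (Finset.subset_univ R) fun i _ hi => hs.1 R i hi).symm

lemma exists_isProfile (μ : Finset (Fin n) → ℝ≥0) : ∃ s, IsProfile n μ s := by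
  refine ⟨fun R i => if h : R.Nonempty then if i = R.min' h then μ R else 0 else 0,
    fun R i hi => ?_, fun R hR => ?_⟩
  · dsimp only
    split_ifs with h he
    · exact absurd (he ▸ R.min'_mem h) hi
    all_goals rfl
  · simp only [dif_pos hR, Finset.sum_ite_eq', if_pos (R.min'_mem hR)]

lemma isCompact_setOf_isProfile (μ : Finset (Fin n) → ℝ≥0) :
    IsCompact {s | IsProfile n μ s} := by
  have hclosed : IsClosed {s | IsProfile n μ s} := by
    simp only [IsProfile, Set.ofPred_and, Set.ofPred_forall]
    refine .inter (isClosed_iInter fun R => isClosed_iInter fun i => isClosed_iInter fun _ => ?_)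
      (isClosed_iInter fun R => isClosed_iInter fun _ => ?_)
    · exact isClosed_eq (by fun_prop) continuous_const
    · exact isClosed_eq (continuous_finsetSum _ fun _ _ => by fun_prop) continuous_const
  refine (isCompact_univ_pi fun R => isCompact_univ_pi fun _ => isCompact_Icc
    (a := 0) (b := μ R)).of_isClosed_subset hclosed fun s hs R _ i _ => ⟨zero_le, ?_⟩
  by_cases hi : i ∈ R
  · exact hs.2 R ⟨i, hi⟩ ▸ Finset.single_le_sum (fun _ _ => zero_le) hi
  · simp [hs.1 R i hi]

lemma load_update_add (s : Finset (Fin n) → Fin n → ℝ≥0) (R : Finset (Fin n)) (v : Fin n → ℝ≥0)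
    (x : Fin n) : load n (Function.update s R v) x + s R x = load n s x + v x := by
  simp only [load, ← Finset.add_sum_erase _ _ (Finset.mem_univ R), Function.update_self]
  rw [Finset.sum_congr rfl fun R' hR' => by
    rw [Function.update_of_ne (Finset.ne_of_mem_erase hR')]]
  ring

lemma IsProfile.exists_transfer (hs : IsProfile n μ s) {R : Finset (Fin n)} {i k : Fin n}
    (hi : i ∈ R) (hk : k ∈ R) (hik : i ≠ k) {ε : ℝ≥0} (hε : ε ≤ s R k) :
    ∃ s', IsProfile n μ s' ∧ load n s' i = load n s i + ε ∧ load n s' k = load n s k - ε ∧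
      ∀ x, x ≠ i → x ≠ k → load n s' x = load n s x := by
  set v := Function.update (Function.update (s R) k (s R k - ε)) i (s R i + ε) with hv
  have hvi : v i = s R i + ε := by simp [hv]
  have hvk : v k = s R k - ε := by simp [hv, hik.symm]
  have hvx : ∀ x, x ≠ i → x ≠ k → v x = s R x := fun x hxi hxk => by simp [hv, hxi, hxk]
  have hsplit : ∀ g : Fin n → ℝ≥0, ∑ x ∈ R, g x = g i + (g k + ∑ x ∈ (R.erase i).erase k, g x) :=
    fun g => by rw [Finset.add_sum_erase _ _ (Finset.mem_erase.2 ⟨hik.symm, hk⟩),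
      Finset.add_sum_erase _ _ hi]
  have hload := load_update_add s R v
  refine ⟨Function.update s R v, ⟨fun R' x hx => ?_, fun R' hR' => ?_⟩, ?_, ?_,
    fun x hxi hxk => add_right_cancel ((hload x).trans (by rw [hvx x hxi hxk]))⟩
  · rcases eq_or_ne R' R with rfl | hR
    · rw [Function.update_self, hvx x (ne_of_mem_of_not_mem hi hx).symm
        (ne_of_mem_of_not_mem hk hx).symm, hs.1 R' x hx]
    · rw [Function.update_of_ne hR, hs.1 R' x hx]
  · rcases eq_or_ne R' R with rfl | hR
    · rw [Function.update_self, ← hs.2 R' hR', hsplit, hsplit, hvi, hvk,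
        Finset.sum_congr rfl fun x hx => hvx x (Finset.ne_of_mem_erase (Finset.mem_of_mem_erase hx))
          (Finset.ne_of_mem_erase hx), add_assoc, ← add_assoc ε, add_tsub_cancel_of_le hε]
    · rw [Function.update_of_ne hR, hs.2 R' hR']
  · exact add_right_cancel ((hload i).trans (by rw [hvi, add_right_comm, add_assoc]))
  · apply NNReal.coe_injective
    have := congrArg NNReal.toReal (hload k)
    push_cast [hvk, NNReal.coe_sub hε, NNReal.coe_sub (hε.trans (le_load s R k))] at this ⊢
    linarith

noncomputable def potential (n : ℕ) (f : Fin n → ℝ≥0 → ℝ) (s : Finset (Fin n) → Fin n → ℝ≥0) :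
    ℝ :=
  ∑ i, primitive (f i) (load n s i)

lemma continuous_potential (hmono : ∀ i, Monotone (f i)) : Continuous (potential n f) :=
  continuous_finsetSum _ fun i _ =>
    (continuous_primitive (hmono i)).comp (continuous_finsetSum _ fun _ _ => by fun_prop)

lemma potential_lt_of_transfer (hmono : ∀ i, Monotone (f i)) {i k : Fin n} (hik : i ≠ k)
    {ε : ℝ≥0} (hε : 0 < ε) (hεk : ε ≤ load n s k) (hi : load n s' i = load n s i + ε)
    (hk : load n s' k = load n s k - ε) (hrest : ∀ x, x ≠ i → x ≠ k → load n s' x = load n s x)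
    (hlt : f i (load n s i + ε) < f k (load n s k - ε)) :
    potential n f s' < potential n f s := by
  rw [← sub_neg, potential, potential, ← Finset.sum_sub_distrib,
    Fintype.sum_eq_add i k hik fun x hx => by rw [hrest x hx.1 hx.2, sub_self], hi, hk]
  have hi' := primitive_sub_primitive_le (hmono i) (le_self_add : load n s i ≤ load n s i + ε)
  have hk' := le_primitive_sub_primitive (hmono k) (tsub_le_self : load n s k - ε ≤ load n s k)
  push_cast [NNReal.coe_sub hεk] at hi' hk'
  nlinarith [mul_lt_mul_of_pos_left hlt (NNReal.coe_pos.2 hε)]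

lemma IsProfile.exists_potential_lt (hmono : ∀ i, Monotone (f i))
    (hcont : ∀ i, Continuous (f i)) (hs : IsProfile n μ s) {R : Finset (Fin n)} {i k : Fin n}
    (hi : i ∈ R) (hk : k ∈ R) (hpos : 0 < s R k) (hlt : cost n f s i < cost n f s k) :
    ∃ s', IsProfile n μ s' ∧ potential n f s' < potential n f s := by
  have hik : i ≠ k := by rintro rfl; exact hlt.false
  -- continuity of `f i` and `f k` lets a small enough mass move from `k` to `i` at a gain
  obtain ⟨ε, ⟨hεk, hεlt⟩, hε⟩ : ∃ ε : ℝ≥0, (ε ≤ s R k ∧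
      f i (load n s i + ε) < f k (load n s k - ε)) ∧ 0 < ε := by
    refine (((eventually_le_nhds hpos).and ?_).filter_mono nhdsWithin_le_nhds).and
      (self_mem_nhdsWithin (s := Set.Ioi 0)) |>.exists
    have hcts : Continuous fun ε : ℝ≥0 => f k (load n s k - ε) - f i (load n s i + ε) := by
      have := hcont i; have := hcont k; fun_prop
    simpa using hcts.continuousAt.eventually (lt_mem_nhds (sub_pos.2 (by simpa [cost] using hlt)))
  obtain ⟨s', hs', hs'i, hs'k, hs'x⟩ := hs.exists_transfer hi hk hik hεk
  exact ⟨s', hs', potential_lt_of_transfer hmono hik hε (hεk.trans (le_load s R k)) hs'i hs'k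
    hs'x hεlt⟩

theorem exists_isNash (hmono : ∀ i, Monotone (f i)) (hcont : ∀ i, Continuous (f i))
    (μ : Finset (Fin n) → ℝ≥0) : ∃ s, IsNash n f μ s := by
  obtain ⟨s, hs, hmin⟩ := (isCompact_setOf_isProfile μ).exists_isMinOn
    (exists_isProfile μ) (continuous_potential hmono).continuousOn
  refine ⟨s, hs, fun R k hk hpos i hi => not_lt.1 fun hlt => ?_⟩
  obtain ⟨s', hs', hlt'⟩ := IsProfile.exists_potential_lt hmono hcont hs hi hk hpos hlt
  exact (hmin hs').not_gt hlt'

/- If type `R` moved mass onto a resource `i` whose cost rose and off a resource `k` whose cost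
did not, the equilibrium conditions would give `cost s' i ≤ cost s' k ≤ cost s k ≤ cost s i`. -/
lemma sum_filter_le_sum_filter_add_tsub (hs : IsNash n f μ s)
    (hs' : IsNash n f μ' s') (R : Finset (Fin n)) :
    ∑ i with cost n f s i < cost n f s' i, s' R i ≤
      ∑ i with cost n f s i < cost n f s' i, s R i + (μ' R - μ R) := by
  set A := Finset.univ.filter fun i => cost n f s i < cost n f s' i
  by_cases hmove : ∀ i ∈ A, s' R i ≤ s R i
  · exact (Finset.sum_le_sum hmove).trans le_self_add
  push Not at hmove
  obtain ⟨i, hiA, hi⟩ := hmove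
  have hiR : i ∈ R := hs'.1.mem_of_pos (zero_le.trans_lt hi)
  have hstay : ∀ k ∈ Aᶜ, s R k ≤ s' R k := by
    intro k hkA
    by_contra! hk
    have hkR : k ∈ R := hs.1.mem_of_pos (zero_le.trans_lt hk)
    have hcost : cost n f s' k ≤ cost n f s k := by simpa [A] using hkA
    exact (Finset.mem_filter.1 hiA).2.not_ge <| (hs'.2 R i hiR (zero_le.trans_lt hi) k hkR).trans
      (hcost.trans (hs.2 R k hkR (zero_le.trans_lt hk) i hiR))
  have hR : R.Nonempty := ⟨i, hiR⟩
  refine le_of_add_le_add_right (a := ∑ k ∈ Aᶜ, s R k) ?_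
  calc ∑ k ∈ A, s' R k + ∑ k ∈ Aᶜ, s R k ≤ ∑ k ∈ A, s' R k + ∑ k ∈ Aᶜ, s' R k :=
        add_le_add le_rfl (Finset.sum_le_sum hstay)
    _ = μ' R := by rw [Finset.sum_add_sum_compl, hs'.1.sum_univ_s8 hR]
    _ ≤ (μ' R - μ R) + μ R := le_tsub_add
    _ = ∑ k ∈ A, s R k + (μ' R - μ R) + ∑ k ∈ Aᶜ, s R k := by
        rw [← hs.1.sum_univ_s8 hR, ← Finset.sum_add_sum_compl A]; ring

lemma sum_filter_load_le (hs : IsNash n f μ s) (hs' : IsNash n f μ' s') :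
    ∑ i with cost n f s i < cost n f s' i, load n s' i ≤
      ∑ i with cost n f s i < cost n f s' i, load n s i + ∑ R, (μ' R - μ R) := by
  simp only [load]
  calc ∑ i with cost n f s i < cost n f s' i, ∑ R, s' R i
      = ∑ R, ∑ i with cost n f s i < cost n f s' i, s' R i := Finset.sum_comm
    _ ≤ ∑ R, (∑ i with cost n f s i < cost n f s' i, s R i + (μ' R - μ R)) :=
        Finset.sum_le_sum fun R _ => sum_filter_le_sum_filter_add_tsub hs hs' R
    _ = _ := by rw [Finset.sum_add_distrib, Finset.sum_comm]

lemma load_le_load_add_of_cost_lt (hmono : ∀ i, Monotone (f i)) (hs : IsNash n f μ s)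
    (hs' : IsNash n f μ' s') {j : Fin n} (hj : cost n f s j < cost n f s' j) :
    load n s' j ≤ load n s j + ∑ R, (μ' R - μ R) := by
  have hle : ∀ i ∈ Finset.univ.filter fun i => cost n f s i < cost n f s' i,
      load n s i ≤ load n s' i :=
    fun i hi => ((hmono i).reflect_lt (Finset.mem_filter.1 hi).2).le
  rw [← tsub_le_iff_left]
  calc load n s' j - load n s j
      ≤ ∑ i with cost n f s i < cost n f s' i, (load n s' i - load n s i) :=
        Finset.single_le_sum (f := fun i => load n s' i - load n s i) (fun _ _ => zero_le)
          (by simpa using hj)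
    _ = ∑ i with cost n f s i < cost n f s' i, load n s' i -
          ∑ i with cost n f s i < cost n f s' i, load n s i := Finset.sum_tsub_distrib _ hle
    _ ≤ ∑ R, (μ' R - μ R) := tsub_le_iff_left.2 (sum_filter_load_le hs hs')

theorem IsNash.cost_le_cost_of_le (hmono : ∀ i, Monotone (f i)) (hs : IsNash n f μ s)
    (hs' : IsNash n f μ' s') (hμ : μ ≤ μ') (j : Fin n) : cost n f s j ≤ cost n f s' j := by
  refine not_lt.1 fun hlt => hlt.not_ge (hmono j ?_)
  simpa [tsub_eq_zero_of_le (hμ _)] using load_le_load_add_of_cost_lt hmono hs' hs hlt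

lemma sum_update_tsub_update (μ : Finset (Fin n) → ℝ≥0) (R₀ : Finset (Fin n)) (m m' : ℝ≥0) :
    ∑ R, (Function.update μ R₀ m' R - Function.update μ R₀ m R) = m' - m := by
  rw [Fintype.sum_eq_single R₀ fun R hR => by simp [Function.update_of_ne hR]]
  simp

theorem IsNash.cost_eq_or_dist_load_le (hmono : ∀ i, Monotone (f i)) {R₀ : Finset (Fin n)}
    {m m' : ℝ≥0} (hs : IsNash n f (Function.update μ R₀ m) s)
    (hs' : IsNash n f (Function.update μ R₀ m') s') (j : Fin n) :
    cost n f s j = cost n f s' j ∨ dist (load n s j) (load n s' j) ≤ dist m m' := by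
  wlog hm : m ≤ m' generalizing m m' s s'
  · rw [dist_comm, dist_comm m, eq_comm]
    exact this hs' hs (le_of_not_ge hm)
  refine (hs.cost_le_cost_of_le hmono hs' (Function.update_mono hm) j).eq_or_lt.imp_right
    fun hlt => ?_
  have hload := load_le_load_add_of_cost_lt hmono hs hs' hlt
  rw [sum_update_tsub_update, ← tsub_le_iff_left] at hload
  rw [dist_nndist, dist_nndist, NNReal.coe_le_coe, NNReal.nndist_eq, NNReal.nndist_eq,
    tsub_eq_zero_of_le ((hmono j).reflect_lt hlt).le, tsub_eq_zero_of_le hm, zero_max, zero_max]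
  exact hload

end RSG

theorem comparative_statics_general (n : ℕ) (f : Fin n → ℝ≥0 → ℝ)
    (hmono : ∀ j, Monotone (f j)) (hcont : ∀ j, Continuous (f j))
    (R₀ : Finset (Fin n))
    (μ : Finset (Fin n) → ℝ≥0) (j : Fin n) (H : ℝ≥0 → ℝ)
    (hH : ∀ m : ℝ≥0, ∀ s : Finset (Fin n) → Fin n → ℝ≥0,
      IsNash n f (Function.update μ R₀ m) s → cost n f s j = H m) :
    (Continuous H ∧ Monotone H) ∧
    (∀ K : ℝ≥0, LipschitzWith K (f j) → LipschitzWith K H) := by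
  choose s hs using fun m : ℝ≥0 => exists_isNash hmono hcont (Function.update μ R₀ m)
  have hH' : H = f j ∘ fun m => load n (s m) j := funext fun m => (hH m (s m) (hs m)).symm
  have hclose m m' := (hs m).cost_eq_or_dist_load_le hmono (hs m') j
  refine ⟨⟨hH' ▸ (hcont j).comp_of_eq_or_dist_le hclose, fun m m' hm => ?_⟩,
    fun K hK => hH' ▸ hK.comp_of_eq_or_dist_le hclose⟩
  rw [← hH m (s m) (hs m), ← hH m' (s m') (hs m')]
  exact (hs m).cost_le_cost_of_le hmono (hs m') (Function.update_mono hm) j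

/-- Comparative statics: fix a game with continuous
nondecreasing cost functions, a type `R₀`, and let `H` be the (well-defined)
cost of resource `j` in Nash equilibrium of the game in which the mass of
type `R₀` is `m` (all other masses fixed). Then `H` is continuous and
nondecreasing, and if `f j` is `K`-Lipschitz then so is `H`. -/
theorem comparative_statics (n : ℕ) (f : Fin n → ℝ≥0 → ℝ)
    (hmono : ∀ j, Monotone (f j)) (hcont : ∀ j, Continuous (f j))
    (R₀ : Finset (Fin n)) (hR₀ : R₀.Nonempty)
    (μ : Finset (Fin n) → ℝ≥0) (j : Fin n) (H : ℝ≥0 → ℝ)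
    (hH : ∀ m : ℝ≥0, ∀ s : Finset (Fin n) → Fin n → ℝ≥0,
      IsNash n f (Function.update μ R₀ m) s → cost n f s j = H m) :
    (Continuous H ∧ Monotone H) ∧
    (∀ K : ℝ≥0, LipschitzWith K (f j) → LipschitzWith K H) :=
  comparative_statics_general n f hmono hcont R₀ μ j H hH
end
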